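/- arXiv:1511.08976 — 10 statements merged into one kernel-verified Lean document; each statement's English description precedes it below -/
import Mathlib

section
/- Let X and Y be real Banach spaces, A₁ : Y → X and A₂ : X → Y continuous linear operators, B = A₁ ∘ A₂ : X → X and B¹ = A₂ ∘ A₁ : Y → Y. Suppose f : ℝ → X is differentiable and x₁ : ℝ → Y is twice differentiable with B¹(x₁'(t)) = x₁(t) + A₂(f(t)) for all t. Then x(t) := −f(t) + A₁(x₁'(t)) is differentiable, satisfies B(x'(t)) = x(t) + f(t) for all t, and moreover A₂(x(t)) = x₁(t) for all t. -/
/-- lifting step for a skeleton decomposition `B = A₁ ∘ A₂`,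
`B¹ = A₂ ∘ A₁`: if `x₁` is a twice differentiable solution of
`B¹ x₁' = x₁ + A₂ f` with `f` differentiable, then `x := -f + A₁ x₁'` is a
differentiable solution of `B x' = x + f`, and `A₂ ∘ x = x₁`. -/
theorem stmt2
    {X Y : Type*} [NormedAddCommGroup X] [NormedSpace ℝ X] [CompleteSpace X]
    [NormedAddCommGroup Y] [NormedSpace ℝ Y] [CompleteSpace Y]
    (A₁ : Y →L[ℝ] X) (A₂ : X →L[ℝ] Y)
    (B : X →L[ℝ] X) (B₁ : Y →L[ℝ] Y)
    (hB : B = A₁.comp A₂) (hB₁ : B₁ = A₂.comp A₁)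
    (f : ℝ → X) (hf : Differentiable ℝ f)
    (x₁ : ℝ → Y) (hx₁ : Differentiable ℝ x₁) (hx₁' : Differentiable ℝ (deriv x₁))
    (hsol₁ : ∀ t : ℝ, B₁ (deriv x₁ t) = x₁ t + A₂ (f t)) :
    Differentiable ℝ (fun t => -f t + A₁ (deriv x₁ t)) ∧
      (∀ t : ℝ, B (deriv (fun s => -f s + A₁ (deriv x₁ s)) t)
          = (-f t + A₁ (deriv x₁ t)) + f t) ∧
      ∀ t : ℝ, A₂ (-f t + A₁ (deriv x₁ t)) = x₁ t := by
  have hA₁x : Differentiable ℝ (fun s => A₁ (deriv x₁ s)) := A₁.differentiable.comp hx₁'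
  have hx : Differentiable ℝ (fun t => -f t + A₁ (deriv x₁ t)) := hf.neg.add hA₁x
  -- A₂ x = x₁
  have hA2 : ∀ t : ℝ, A₂ (-f t + A₁ (deriv x₁ t)) = x₁ t := by
    intro t
    have := hsol₁ t
    rw [hB₁] at this
    simp only [ContinuousLinearMap.comp_apply] at this
    rw [map_add, map_neg, this]
    abel
  -- derivative of x
  have hderiv : ∀ t : ℝ, deriv (fun s => -f s + A₁ (deriv x₁ s)) t
      = -deriv f t + A₁ (deriv (deriv x₁) t) := by
    intro t
    have h1 : HasDerivAt (fun s => -f s) (-deriv f t) t :=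
      ((hf t).hasDerivAt).neg
    have h2 : HasDerivAt (fun s => A₁ (deriv x₁ s)) (A₁ (deriv (deriv x₁) t)) t :=
      A₁.hasFDerivAt.comp_hasDerivAt t ((hx₁' t).hasDerivAt)
    exact (h1.add h2).deriv
  -- differentiated equation: B₁ x₁'' = x₁' + A₂ f'
  have hsol' : ∀ t : ℝ, B₁ (deriv (deriv x₁) t) = deriv x₁ t + A₂ (deriv f t) := by
    intro t
    have hfun : (fun s => B₁ (deriv x₁ s)) = fun s => x₁ s + A₂ (f s) := funext hsol₁
    have hL : HasDerivAt (fun s => B₁ (deriv x₁ s)) (B₁ (deriv (deriv x₁) t)) t :=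
      B₁.hasFDerivAt.comp_hasDerivAt t ((hx₁' t).hasDerivAt)
    have hR : HasDerivAt (fun s => x₁ s + A₂ (f s))
        (deriv x₁ t + A₂ (deriv f t)) t :=
      ((hx₁ t).hasDerivAt).add (A₂.hasFDerivAt.comp_hasDerivAt t ((hf t).hasDerivAt))
    have := (hfun ▸ hL).unique hR
    rw [← this]
  refine ⟨hx, ?_, hA2⟩
  intro t
  rw [hderiv t, hB]
  simp only [ContinuousLinearMap.comp_apply]
  have : A₂ (-deriv f t + A₁ (deriv (deriv x₁) t)) = deriv x₁ t := by
    have := hsol' t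
    rw [hB₁] at this
    simp only [ContinuousLinearMap.comp_apply] at this
    rw [map_add, map_neg, this]
    abel
  rw [this]
  abel
end

section
/- Let B : X₀ → X₀ be a continuous linear operator on a real Banach space X₀ possessing a regular skeleton chain of length p: real Banach spaces X₀, X₁, …, X_p, continuous linear operators A_{2i} : X_{i−1} → X_i and A_{2i−1} : X_i → X_{i−1} (i = 1,…,p) with B = A₁ ∘ A₂, A_{2i} ∘ A_{2i−1} = A_{2i+1} ∘ A_{2i+2} for i = 1,…,p−1, and B^p := A_{2p} ∘ A_{2p−1} : X_p → X_p continuously invertible. Let M := A_{2p} ∘ A_{2p−2} ∘ ⋯ ∘ A₂ : X₀ → X_p. If f : ℝ → X₀ is p times differentiable, then for every c₀ ∈ X_p there exists a unique differentiable x : ℝ → X₀ satisfying B(x'(t)) = x(t) + f(t) for all t and M(x(0)) = c₀. -/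
/-!
Put `T = B^p = A_{2p} A_{2p-1}` on `X_p` and `N = A₁ A₃ ⋯ A_{2p-1} : X_p → X₀`. The chain relations
give `B N = N T`, `Bᵖ = N M`, `M N = Tᵖ` and `M_k B = A_{2k+1} M_{k+1}` for the partial products
`M_k = A_{2k} ⋯ A₂`.

Existence: with `P = ∑_{k<p} Bᵏ f⁽ᵏ⁾`, the function `x = N g - P` solves `B x' = x + f` as soon as
`g' = T⁻¹ (g + M f⁽ᵖ⁾)`. Since `f⁽ᵖ⁾` need not be continuous, this equation is solved as
`g = w + T⁻¹ M f⁽ᵖ⁻¹⁾` with `w' = T⁻¹ w + T⁻² M f⁽ᵖ⁻¹⁾` given by variation of constants, and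
`Tᵖ g(0) = c₀ + M P(0)` fixes the initial value.

Uniqueness: if `B u' = u` and `M u(0) = 0`, then `T (M u)' = M B u' = M u`, so `M u ≡ 0`. Then
`M_{k+1} u ≡ 0` forces `M_{k+1} u' ≡ 0`, hence `M_k u = M_k B u' = A_{2k+1} M_{k+1} u' ≡ 0`, and
descending to `k = 0` gives `u ≡ 0`.
-/

open ContinuousLinearMap

/-- The composition `M_k = A_{2k} ∘ A_{2(k-1)} ∘ ⋯ ∘ A₂ : X₀ → X_k` built from the
forward operators `Af k = A_{2(k+1)} : X_k → X_{k+1}` of a skeleton chain. -/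
noncomputable def chainComp {X : ℕ → Type*} [∀ n, NormedAddCommGroup (X n)]
    [∀ n, NormedSpace ℝ (X n)] (Af : ∀ k : ℕ, X k →L[ℝ] X (k + 1)) :
    ∀ k : ℕ, X 0 →L[ℝ] X k
  | 0 => ContinuousLinearMap.id ℝ (X 0)
  | (k + 1) => (Af k).comp (chainComp Af k)

section Algebra

variable {E F : Type*} [NormedAddCommGroup E] [NormedSpace ℝ E]
  [NormedAddCommGroup F] [NormedSpace ℝ F]

theorem comp_pow_comp_comp (a : E →L[ℝ] F) (b : F →L[ℝ] E) (n : ℕ) :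
    a ∘L ((b ∘L a) ^ n) ∘L b = (a ∘L b) ^ (n + 1) := by
  induction n with
  | zero => ext; rfl
  | succ n ih =>
    rw [pow_succ, pow_succ _ (n + 1), ← ih]
    ext; rfl

theorem apply_sum_pow_shift (B : E →L[ℝ] E) (a : ℕ → E) (n : ℕ) :
    B (∑ k ∈ Finset.range n, (B ^ k) (a (k + 1))) + a 0
      = ∑ k ∈ Finset.range n, (B ^ k) (a k) + (B ^ n) (a n) := by
  simp only [map_sum, ← mul_apply_eq_comp, ← pow_succ']
  rw [← Finset.sum_range_succ, Finset.sum_range_succ' _ n, pow_zero, one_apply_eq_self]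

end Algebra

section LinearODE

variable {E : Type*} [NormedAddCommGroup E] [NormedSpace ℝ E]

theorem eq_zero_of_hasDerivAt_clm_apply {A : E →L[ℝ] E} {y : ℝ → E}
    (hy : ∀ t, HasDerivAt y (A (y t)) t) {t₀ : ℝ} (hy₀ : y t₀ = 0) : y = 0 :=
  ODE_solution_unique_univ (v := fun _ => A) (s := fun _ => Set.univ)
    (fun _ => A.lipschitz.lipschitzOnWith) (fun t => ⟨hy t, trivial⟩)
    (fun t => ⟨by simp, trivial⟩) hy₀

variable [CompleteSpace E]

theorem exp_smul_apply_exp_neg_smul_apply (A : E →L[ℝ] E) (t : ℝ) (v : E) :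
    NormedSpace.exp (t • A) (NormedSpace.exp ((-t) • A) v) = v := by
  let _ : NormedAlgebra ℚ (E →L[ℝ] E) := NormedAlgebra.restrictScalars ℚ ℝ _
  rw [← mul_apply_eq_comp, ← NormedSpace.exp_add_of_commute
    (((Commute.refl A).smul_left t).smul_right _), neg_smul, add_neg_cancel,
    NormedSpace.exp_zero, one_apply_eq_self]

theorem exists_hasDerivAt_clm_apply_add (A : E →L[ℝ] E) {h : ℝ → E} (hh : Continuous h)
    (y₀ : E) : ∃ y : ℝ → E, y 0 = y₀ ∧ ∀ t, HasDerivAt y (A (y t) + h t) t := by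
  have hexp : Continuous fun s : ℝ => NormedSpace.exp (s • A) :=
    continuous_iff_continuousAt.2 fun s => (hasDerivAt_exp_smul_const A s).continuousAt
  let φ := fun s : ℝ => NormedSpace.exp ((-s) • A) (h s)
  have hφ : Continuous φ := (hexp.comp continuous_neg).clm_apply hh
  refine ⟨fun t => NormedSpace.exp (t • A) (y₀ + ∫ s in (0 : ℝ)..t, φ s), by simp, fun t => ?_⟩
  have hI : HasDerivAt (fun t => y₀ + ∫ s in (0 : ℝ)..t, φ s) (φ t) t :=
    (hφ.integral_hasStrictDerivAt 0 t).hasDerivAt.const_add y₀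
  refine ((hasDerivAt_exp_smul_const' A t).clm_apply hI).congr_deriv ?_
  simp only [φ, mul_apply_eq_comp, exp_smul_apply_exp_neg_smul_apply]

theorem exists_hasDerivAt_clm_apply_add_of_hasDerivAt (A : E →L[ℝ] E) {φ φ' : ℝ → E}
    (hφ : ∀ t, HasDerivAt φ (φ' t) t) (y₀ : E) :
    ∃ y : ℝ → E, y 0 = y₀ ∧ ∀ t, HasDerivAt y (A (y t + φ' t)) t := by
  have hφc : Continuous φ := continuous_iff_continuousAt.2 fun t => (hφ t).continuousAt
  obtain ⟨w, hw₀, hw⟩ := exists_hasDerivAt_clm_apply_add A (h := fun t => A (A (φ t)))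
    (A.continuous.comp (A.continuous.comp hφc)) (y₀ - A (φ 0))
  refine ⟨fun t => w t + A (φ t), by simp [hw₀], fun t => ?_⟩
  refine ((hw t).fun_add (A.hasFDerivAt.comp_hasDerivAt t (hφ t))).congr_deriv ?_
  simp only [map_add]

end LinearODE

section RegularizedProblem

variable {E F : Type*} [NormedAddCommGroup E] [NormedSpace ℝ E]
  [NormedAddCommGroup F] [NormedSpace ℝ F] [CompleteSpace F]

theorem hasDerivAt_sum_pow_iteratedDeriv (B : E →L[ℝ] E) {f : ℝ → E} {n : ℕ}
    (hf : ∀ k < n, Differentiable ℝ (iteratedDeriv k f)) (t : ℝ) :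
    HasDerivAt (fun t => ∑ k ∈ Finset.range n, (B ^ k) (iteratedDeriv k f t))
      (∑ k ∈ Finset.range n, (B ^ k) (iteratedDeriv (k + 1) f t)) t :=
  HasDerivAt.fun_sum fun k hk => (B ^ k).hasFDerivAt.comp_hasDerivAt t <| by
    rw [iteratedDeriv_succ]
    exact (hf k (Finset.mem_range.1 hk) t).hasDerivAt

theorem exists_regularized_solution {B : E →L[ℝ] E} {M : E →L[ℝ] F} {N : F →L[ℝ] E}
    {T : F →L[ℝ] F} {q : ℕ} (hT : IsUnit T) (hBN : B ∘L N = N ∘L T)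
    (hpow : B ^ (q + 1) = N ∘L M) (hMN : M ∘L N = T ^ (q + 1)) {f : ℝ → E}
    (hf : ∀ k < q + 1, Differentiable ℝ (iteratedDeriv k f)) (c₀ : F) :
    ∃ x : ℝ → E, Differentiable ℝ x ∧ (∀ t, B (deriv x t) = x t + f t) ∧ M (x 0) = c₀ := by
  set S := (↑hT.unit⁻¹ : F →L[ℝ] F)
  have hTS : ∀ v, T (S v) = v := fun v => by
    rw [← mul_apply_eq_comp, hT.mul_val_inv, one_apply_eq_self]
  set P := fun t => ∑ k ∈ Finset.range (q + 1), (B ^ k) (iteratedDeriv k f t)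
  obtain ⟨g₀, hTg₀⟩ : ∃ g₀, (T ^ (q + 1)) g₀ = c₀ + M (P 0) :=
    ⟨(↑(hT.pow (q + 1)).unit⁻¹ : F →L[ℝ] F) (c₀ + M (P 0)), by
      rw [← mul_apply_eq_comp, IsUnit.mul_val_inv, one_apply_eq_self]⟩
  obtain ⟨g, hg0, hg⟩ := exists_hasDerivAt_clm_apply_add_of_hasDerivAt S
    (fun t => M.hasFDerivAt.comp_hasDerivAt t ((hf q q.lt_succ_self) t).hasDerivAt) g₀
  have hx : ∀ t, HasDerivAt (fun t => N (g t) - P t)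
      (N (S (g t + M (iteratedDeriv (q + 1) f t)))
        - ∑ k ∈ Finset.range (q + 1), (B ^ k) (iteratedDeriv (k + 1) f t)) t := fun t => by
    rw [iteratedDeriv_succ]
    exact (N.hasFDerivAt.comp_hasDerivAt t (hg t)).sub (hasDerivAt_sum_pow_iteratedDeriv B hf t)
  refine ⟨_, fun t => (hx t).differentiableAt, fun t => ?_, ?_⟩
  · have hshift := apply_sum_pow_shift B (fun k => iteratedDeriv k f t) (q + 1)
    rw [iteratedDeriv_zero] at hshift
    rw [(hx t).deriv, map_sub, ← comp_apply B N, hBN, comp_apply, hTS, map_add, ← comp_apply N M,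
      ← hpow, ← add_sub_cancel_right (B _) (f t), hshift]
    abel
  · rw [map_sub, ← comp_apply M N, hMN, hg0, hTg₀, add_sub_cancel_right]

end RegularizedProblem

section Chain

variable {X : ℕ → Type*} [∀ n, NormedAddCommGroup (X n)] [∀ n, NormedSpace ℝ (X n)]
  {Af : ∀ k : ℕ, X k →L[ℝ] X (k + 1)} {Ab : ∀ k : ℕ, X (k + 1) →L[ℝ] X k} {n : ℕ}

-- `chainCompBack Ab k = A₁ ∘ A₃ ∘ ⋯ ∘ A_{2k-1} : X_k → X₀`, where `Ab k = A_{2k+1}`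
variable (Ab) in
noncomputable def chainCompBack : ∀ k : ℕ, X k →L[ℝ] X 0
  | 0 => ContinuousLinearMap.id ℝ (X 0)
  | (k + 1) => (chainCompBack k).comp (Ab k)

variable (hch : ∀ k < n, (Af k).comp (Ab k) = (Ab (k + 1)).comp (Af (k + 1)))
include hch

theorem chainComp_comp_eq_comp_chainComp {k : ℕ} (hk : k ≤ n) :
    chainComp Af k ∘L (Ab 0 ∘L Af 0) = Ab k ∘L chainComp Af (k + 1) := by
  induction k with
  | zero => rfl
  | succ k ih =>
    simp only [chainComp] at ih ⊢
    rw [comp_assoc, ih (by omega), ← comp_assoc, hch k (by omega), comp_assoc]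

theorem comp_chainCompBack_eq_chainCompBack_comp {k : ℕ} (hk : k ≤ n) :
    (Ab 0 ∘L Af 0) ∘L chainCompBack Ab (k + 1) = chainCompBack Ab (k + 1) ∘L (Af k ∘L Ab k) := by
  induction k with
  | zero => rfl
  | succ k ih =>
    rw [chainCompBack, ← comp_assoc, ih (by omega), comp_assoc, comp_assoc, ← comp_assoc _ (Ab k),
      hch k (by omega)]
    simp only [comp_assoc]

theorem pow_eq_chainCompBack_comp_chainComp {k : ℕ} (hk : k ≤ n) :
    (Ab 0 ∘L Af 0) ^ (k + 1) = chainCompBack Ab (k + 1) ∘L chainComp Af (k + 1) := by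
  induction k with
  | zero => rfl
  | succ k ih =>
    rw [pow_succ', ih (by omega), mul_def, ← comp_assoc,
      comp_chainCompBack_eq_chainCompBack_comp hch (by omega), hch k (by omega)]
    simp only [chainCompBack, chainComp, comp_assoc]

theorem chainComp_comp_chainCompBack {k : ℕ} (hk : k ≤ n) :
    chainComp Af (k + 1) ∘L chainCompBack Ab (k + 1) = (Af k ∘L Ab k) ^ (k + 1) := by
  induction k with
  | zero => simp [chainComp, chainCompBack]
  | succ k ih =>
    have : chainComp Af (k + 2) ∘L chainCompBack Ab (k + 2)
        = Af (k + 1) ∘L (chainComp Af (k + 1) ∘L chainCompBack Ab (k + 1)) ∘L Ab (k + 1) := by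
      simp only [chainComp, chainCompBack, comp_assoc]
    rw [this, ih (by omega), hch k (by omega), comp_pow_comp_comp]

theorem chainComp_apply_eq_zero_of_succ {u : ℝ → X 0} (hu : Differentiable ℝ u)
    (hBu : ∀ t, (Ab 0 ∘L Af 0) (deriv u t) = u t) {k : ℕ} (hk : k ≤ n)
    (h : ∀ t, chainComp Af (k + 1) (u t) = 0) (t : ℝ) : chainComp Af k (u t) = 0 := by
  have hderiv : chainComp Af (k + 1) (deriv u t) = 0 := by
    have hM := (chainComp Af (k + 1)).hasFDerivAt.comp_hasDerivAt t (hu t).hasDerivAt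
    rw [show ⇑(chainComp Af (k + 1)) ∘ u = fun _ => 0 from funext h] at hM
    exact hM.unique (hasDerivAt_const t 0)
  rw [← hBu t, ← comp_apply (chainComp Af k), chainComp_comp_eq_comp_chainComp hch hk, comp_apply,
    hderiv, map_zero]

theorem eq_zero_of_forall_chainComp_apply_eq_zero {u : ℝ → X 0} (hu : Differentiable ℝ u)
    (hBu : ∀ t, (Ab 0 ∘L Af 0) (deriv u t) = u t) (h : ∀ t, chainComp Af (n + 1) (u t) = 0) :
    u = 0 := by
  funext t
  exact Nat.decreasingInduction (motive := fun k _ => ∀ t, chainComp Af k (u t) = 0)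
    (fun k hk ih => chainComp_apply_eq_zero_of_succ hch hu hBu (by omega) ih) h n.succ.zero_le t

theorem eq_zero_of_chainComp_apply_zero {u : ℝ → X 0} (hT : IsUnit (Af n ∘L Ab n))
    (hu : Differentiable ℝ u)
    (hBu : ∀ t, (Ab 0 ∘L Af 0) (deriv u t) = u t) (hu₀ : chainComp Af (n + 1) (u 0) = 0) :
    u = 0 := by
  refine eq_zero_of_forall_chainComp_apply_eq_zero hch hu hBu fun t => ?_
  set S := (↑hT.unit⁻¹ : X (n + 1) →L[ℝ] X (n + 1))
  have hY : ∀ t, HasDerivAt (fun t => chainComp Af (n + 1) (u t))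
      (S (chainComp Af (n + 1) (u t))) t := fun t => by
    have hTY : (Af n ∘L Ab n) (chainComp Af (n + 1) (deriv u t))
        = chainComp Af (n + 1) (u t) := by
      rw [comp_apply, ← comp_apply (Ab n), ← chainComp_comp_eq_comp_chainComp hch le_rfl,
        comp_apply, hBu]
      rfl
    rw [← hTY, ← mul_apply_eq_comp S, hT.val_inv_mul, one_apply_eq_self]
    exact (chainComp Af (n + 1)).hasFDerivAt.comp_hasDerivAt t (hu t).hasDerivAt
  exact congrFun (eq_zero_of_hasDerivAt_clm_apply hY hu₀) t

end Chain

/-- if `B` has a regular skeleton chain of length `p = q + 1 ≥ 1`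
(`B = A₁ ∘ A₂`, `A_{2i} ∘ A_{2i-1} = A_{2i+1} ∘ A_{2i+2}`,
`B^p = A_{2p} ∘ A_{2p-1}` continuously invertible) and `f` is `p` times
differentiable, then the equation `B x' = x + f` with the structure-regularized
initial condition `M x(0) = c₀`, `M = A_{2p} ∘ ⋯ ∘ A₂`, has a unique
differentiable solution for every `c₀ ∈ X_p`.
Here `Af k = A_{2(k+1)} : X_k → X_{k+1}` and `Ab k = A_{2k+1} : X_{k+1} → X_k`. -/
theorem stmt4
    {X : ℕ → Type*} [∀ n, NormedAddCommGroup (X n)] [∀ n, NormedSpace ℝ (X n)]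
    [∀ n, CompleteSpace (X n)]
    (p q : ℕ) (hp : p = q + 1)
    (Af : ∀ k : ℕ, X k →L[ℝ] X (k + 1)) (Ab : ∀ k : ℕ, X (k + 1) →L[ℝ] X k)
    (B : X 0 →L[ℝ] X 0) (hB : B = (Ab 0).comp (Af 0))
    (hchain : ∀ k : ℕ, k + 1 < p → (Af k).comp (Ab k) = (Ab (k + 1)).comp (Af (k + 1)))
    (hreg : IsUnit ((Af q).comp (Ab q) : X (q + 1) →L[ℝ] X (q + 1)))
    (f : ℝ → X 0) (hf : ∀ k < p, Differentiable ℝ (iteratedDeriv k f))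
    (c₀ : X p) :
    ∃! x : ℝ → X 0, Differentiable ℝ x ∧
      (∀ t : ℝ, B (deriv x t) = x t + f t) ∧
      chainComp Af p (x 0) = c₀ := by
  subst hp hB
  have hch : ∀ k < q, (Af k).comp (Ab k) = (Ab (k + 1)).comp (Af (k + 1)) :=
    fun k hk => hchain k (by omega)
  obtain ⟨x, hxd, hx, hx₀⟩ := exists_regularized_solution hreg
    (comp_chainCompBack_eq_chainCompBack_comp hch le_rfl)
    (pow_eq_chainCompBack_comp_chainComp hch le_rfl) (chainComp_comp_chainCompBack hch le_rfl)
    hf c₀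
  refine ⟨x, ⟨hxd, hx, hx₀⟩, fun y ⟨hyd, hy, hy₀⟩ => ?_⟩
  have hdiff := eq_zero_of_chainComp_apply_zero hch hreg (hyd.sub hxd)
    (fun t => by rw [Pi.sub_apply, deriv_sub (hyd t) (hxd t), map_sub, hy, hx]; abel)
    (by rw [Pi.sub_apply, map_sub, hy₀, hx₀, sub_self])
  exact sub_eq_zero.1 hdiff
end

section
/- Let B : X₀ → X₀ be a continuous linear operator on a complex Banach space X₀ possessing a regular skeleton chain of length p (complex Banach spaces X₀,…,X_p, operators A_{2i} : X_{i−1} → X_i, A_{2i−1} : X_i → X_{i−1} with B = A₁ ∘ A₂, A_{2i} ∘ A_{2i−1} = A_{2i+1} ∘ A_{2i+2} for i = 1,…,p−1, and B^p = A_{2p} ∘ A_{2p−1} continuously invertible). Suppose the spectrum of B^p lies in the open left half-plane {z ∈ ℂ : Re z < 0}. Then every differentiable solution x : [0,∞) → X₀ of the homogeneous equation B(x'(t)) = x(t) satisfies ‖x(t)‖ → 0 as t → ∞; i.e., the regularized initial-value problem B(dx/dt) = x, M x(0) = c₀ is asymptotically stable. -/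
/-!
Pushing a solution up the chain, `y = M x` satisfies `y = Bᵖ y'`, so `y' = (Bᵖ)⁻¹ y` and
`y t = exp (t (Bᵖ)⁻¹) y 0`. Coming back down,
`A_{2k} ∘ ⋯ ∘ A_2 x = A_{2k+1} (A_{2k+2} ∘ ⋯ ∘ A_2 x)'`, so by induction every level, and in
particular `x` itself, is a fixed bounded operator applied to `y`. Since `Re z⁻¹` and `Re z` have
the same sign, `(Bᵖ)⁻¹` also has spectrum in the open left half-plane. Computing with the
characters of the (commutative, inverse-closed) bicommutant of `a` gives `σ (exp a) ⊆ exp (σ a)`,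
so `exp a` has spectral radius `< 1` and, by Gelfand's formula, `‖exp (t a)‖ → 0`.
-/

open Filter Topology NormedSpace Set

namespace Subalgebra

variable {R A : Type*} [CommRing R] [Ring A] [Algebra R A]

theorem isUnit_of_isUnit_coe_centralizer {s : Set A} {x : centralizer R s}
    (hx : IsUnit (x : A)) : IsUnit x := by
  obtain ⟨u, hu⟩ := hx
  have hinv : (↑u⁻¹ : A) ∈ centralizer R s := fun g hg =>
    (show Commute g u from hu ▸ x.2 g hg).units_inv_right.eq
  exact ⟨⟨x, ⟨_, hinv⟩, Subtype.ext (by simp [← hu]), Subtype.ext (by simp [← hu])⟩, rfl⟩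

theorem spectrum_centralizer_eq {s : Set A} (x : centralizer R s) :
    spectrum R x = spectrum R (x : A) := by
  refine (compl_subset_compl.mpr fun z hz => ?_).antisymm (spectrum.subset_subalgebra x)
  rw [spectrum.mem_resolventSet_iff] at hz ⊢
  exact isUnit_of_isUnit_coe_centralizer (by simpa using hz)

end Subalgebra

theorem spectrum_inv_subset_of_subset_re_neg {A : Type*} [Ring A] [Algebra ℂ A] (u : Aˣ)
    (hu : spectrum ℂ (u : A) ⊆ {z | z.re < 0}) : spectrum ℂ (↑u⁻¹ : A) ⊆ {z | z.re < 0} := by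
  intro z hz
  have hre : z⁻¹.re < 0 := hu (spectrum.inv₀_mem_iff.mpr hz)
  rw [Complex.inv_re] at hre
  exact neg_of_div_neg_left hre (Complex.normSq_nonneg z)

section ComplexBanachAlgebra

variable {𝔸 : Type*} [NormedRing 𝔸] [NormedAlgebra ℂ 𝔸] [CompleteSpace 𝔸]

theorem spectrum_exp_subset (a : 𝔸) : spectrum ℂ (exp a) ⊆ Complex.exp '' spectrum ℂ a := by
  -- the library's lemmas about `exp` ask for a `ℚ`-algebra structure
  let : NormedAlgebra ℚ 𝔸 := .restrictScalars ℚ ℂ 𝔸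
  let S := Subalgebra.centralizer ℂ (centralizer {a})
  have hcomm : ∀ x ∈ S, ∀ y ∈ S, x * y = y * x :=
    centralizer_centralizer_comm_of_comm (by simp)
  let : NormedCommRing S :=
    { (inferInstance : NormedRing S) with mul_comm := fun x y => Subtype.ext (hcomm _ x.2 _ y.2) }
  have : CompleteSpace S := (isClosed_centralizer _).completeSpace_coe
  let : NormedAlgebra ℚ S := .restrictScalars ℚ ℂ S
  let a' : S := ⟨a, subset_centralizer_centralizer rfl⟩
  have hexp : ((exp a' : S) : 𝔸) = exp a := map_exp S.val continuous_subtype_val a'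
  intro z hz
  rw [← hexp] at hz
  obtain ⟨φ, rfl⟩ :=
    WeakDual.CharacterSpace.mem_spectrum_iff_exists.mp (spectrum.subset_subalgebra _ hz)
  refine ⟨φ a', ?_, ?_⟩
  · rw [← Subalgebra.spectrum_centralizer_eq a']
    exact AlgHom.apply_mem_spectrum φ a'
  · rw [map_exp φ (map_continuous φ), Complex.exp_eq_exp_ℂ]

theorem spectralRadius_exp_lt_one {a : 𝔸} (ha : spectrum ℂ a ⊆ {z | z.re < 0}) :
    spectralRadius ℂ (exp a) < 1 := by
  rcases subsingleton_or_nontrivial 𝔸 with h𝔸 | h𝔸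
  · simp [spectrum.SpectralRadius.of_subsingleton]
  obtain ⟨z, hz, hρ⟩ := spectrum.exists_nnnorm_eq_spectralRadius (exp a)
  obtain ⟨w, hw, rfl⟩ := spectrum_exp_subset a hz
  rw [← hρ, ENNReal.coe_lt_one_iff, ← NNReal.coe_lt_one, coe_nnnorm, Complex.norm_exp]
  exact Real.exp_lt_one_iff.mpr (ha hw)

theorem tendsto_pow_atTop_nhds_zero_of_spectralRadius_lt_one {a : 𝔸}
    (ha : spectralRadius ℂ a < 1) : Tendsto (fun n : ℕ => a ^ n) atTop (𝓝 0) := by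
  obtain ⟨c, hρc, hc1⟩ := exists_between ha
  lift c to NNReal using (hc1.trans ENNReal.one_lt_top).ne
  have hlt : ∀ᶠ n : ℕ in atTop, ‖a ^ n‖₊ < c ^ n := by
    have hgelfand := spectrum.pow_nnnorm_pow_one_div_tendsto_nhds_spectralRadius a
    filter_upwards [hgelfand.eventually_lt_const hρc, eventually_ge_atTop 1] with n hn hn1
    rw [one_div, ENNReal.rpow_inv_lt_iff (by positivity), ENNReal.rpow_natCast] at hn
    exact_mod_cast hn
  refine squeeze_zero_norm' (hlt.mono fun n hn => (NNReal.coe_lt_coe.mpr hn).le) ?_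
  exact_mod_cast tendsto_pow_atTop_nhds_zero_of_lt_one c.2 (by exact_mod_cast hc1)

theorem tendsto_exp_smul_atTop_nhds_zero {a : 𝔸} (ha : spectrum ℂ a ⊆ {z | z.re < 0}) :
    Tendsto (fun t : ℝ => exp (t • a)) atTop (𝓝 0) := by
  let : NormedAlgebra ℚ 𝔸 := .restrictScalars ℚ ℂ 𝔸
  obtain ⟨C, hC⟩ := (isCompact_Icc : IsCompact (Icc (0 : ℝ) 1)).exists_bound_of_continuousOn
    (by fun_prop : Continuous fun s : ℝ => exp (s • a)).continuousOn
  have hpow : Tendsto (fun t : ℝ => exp a ^ ⌊t⌋₊) atTop (𝓝 0) :=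
    (tendsto_pow_atTop_nhds_zero_of_spectralRadius_lt_one (spectralRadius_exp_lt_one ha)).comp
      tendsto_nat_floor_atTop
  refine squeeze_zero_norm' ?_ (by simpa using hpow.norm.const_mul C)
  filter_upwards [eventually_ge_atTop 0] with t ht
  have hsplit : t • a = (t - ⌊t⌋₊) • a + (⌊t⌋₊ : ℝ) • a := by rw [← add_smul, sub_add_cancel]
  rw [hsplit, exp_add_of_commute (((Commute.refl a).smul_left _).smul_right _),
    Nat.cast_smul_eq_nsmul, exp_nsmul]
  refine (norm_mul_le _ _).trans (mul_le_mul_of_nonneg_right ?_ (norm_nonneg _))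
  exact hC _ ⟨sub_nonneg.mpr (Nat.floor_le ht), by linarith [Nat.lt_floor_add_one t]⟩

end ComplexBanachAlgebra

section LinearODE

variable {E : Type*} [NormedAddCommGroup E] [NormedSpace ℂ E] [CompleteSpace E]

theorem eqOn_exp_smul_apply_of_hasDerivWithinAt (A : E →L[ℂ] E) {y : ℝ → E}
    (hy : ∀ t ∈ Ici (0 : ℝ), HasDerivWithinAt y (A (y t)) (Ici 0) t) :
    EqOn y (fun t => exp (t • A) (y 0)) (Ici 0) := by
  let _ : NormedAlgebra ℚ (E →L[ℂ] E) := .restrictScalars ℚ ℂ _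
  have hexp (t : ℝ) : HasDerivAt (fun s : ℝ => exp (s • A) (y 0)) (A (exp (t • A) (y 0))) t :=
    ((ContinuousLinearMap.apply ℂ E (y 0)).restrictScalars ℝ).hasFDerivAt.comp_hasDerivAt t
      (hasDerivAt_exp_smul_const' A t)
  intro t ht
  refine ODE_solution_unique (v := fun _ => A) (fun _ => A.lipschitz)
    (fun s hs => (hy s hs.1).continuousWithinAt.mono Icc_subset_Ici_self)
    (fun s hs => (hy s hs.1).mono (Ici_subset_Ici.mpr hs.1))
    (fun s _ => (hexp s).continuousAt.continuousWithinAt)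
    (fun s _ => (hexp s).hasDerivWithinAt) (by simp) ⟨ht, le_rfl⟩

end LinearODE

namespace SkeletonChain

variable {X : ℕ → Type*} [∀ n, NormedAddCommGroup (X n)] [∀ n, NormedSpace ℂ (X n)]

/-- The composite `M = A_{2k} ∘ ⋯ ∘ A_2 : X₀ → X_k`. -/
noncomputable def forwardMap (Af : ∀ k, X k →L[ℂ] X (k + 1)) : ∀ k, X 0 →L[ℂ] X k
  | 0 => ContinuousLinearMap.id ℂ (X 0)
  | k + 1 => (Af k).comp (forwardMap Af k)

variable {Af : ∀ k, X k →L[ℂ] X (k + 1)} {Ab : ∀ k, X (k + 1) →L[ℂ] X k} {p : ℕ}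

theorem comp_forwardMap_succ
    (hchain : ∀ k, k + 1 < p → (Af k).comp (Ab k) = (Ab (k + 1)).comp (Af (k + 1)))
    {k : ℕ} (hk : k < p) :
    (Ab k).comp (forwardMap Af (k + 1)) = (forwardMap Af k).comp ((Ab 0).comp (Af 0)) := by
  induction k with
  | zero => rfl
  | succ k ih =>
    calc (Ab (k + 1)).comp ((Af (k + 1)).comp (forwardMap Af (k + 1)))
        = ((Af k).comp (Ab k)).comp (forwardMap Af (k + 1)) := by
          rw [hchain k hk, ContinuousLinearMap.comp_assoc]
      _ = (Af k).comp ((forwardMap Af k).comp ((Ab 0).comp (Af 0))) := by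
          rw [ContinuousLinearMap.comp_assoc, ih (by omega)]
      _ = _ := rfl

theorem exists_eq_comp_forwardMap
    (hchain : ∀ k, k + 1 < p → (Af k).comp (Ab k) = (Ab (k + 1)).comp (Af (k + 1)))
    {x x' : ℝ → X 0} (hx : ∀ t ∈ Ici (0 : ℝ), HasDerivWithinAt x (x' t) (Ici 0) t)
    (hsol : ∀ t ∈ Ici (0 : ℝ), (Ab 0) (Af 0 (x' t)) = x t) (A : X p →L[ℂ] X p)
    (hA : ∀ t ∈ Ici (0 : ℝ), forwardMap Af p (x' t) = A (forwardMap Af p (x t))) :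
    ∃ D : X p →L[ℂ] X 0, ∀ t ∈ Ici (0 : ℝ), x t = D (forwardMap Af p (x t)) := by
  have hderiv (k : ℕ) {t : ℝ} (ht : t ∈ Ici 0) :
      HasDerivWithinAt (fun s => forwardMap Af k (x s)) (forwardMap Af k (x' t)) (Ici 0) t :=
    ((forwardMap Af k).restrictScalars ℝ).hasFDerivAt.comp_hasDerivWithinAt t (hx t ht)
  suffices ∀ k ≤ p, ∃ D : X p →L[ℂ] X k, ∀ t ∈ Ici (0 : ℝ),
      forwardMap Af k (x t) = D (forwardMap Af p (x t)) from this 0 (Nat.zero_le p)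
  intro k hk
  induction hk using Nat.decreasingInduction with
  | self => exact ⟨ContinuousLinearMap.id ℂ _, fun _ _ => rfl⟩
  | of_succ k hk ih =>
    obtain ⟨D, hD⟩ := ih
    refine ⟨(Ab k).comp (D.comp A), fun t ht => ?_⟩
    -- both sides of `hD` are differentiable, so their derivatives agree on `[0, ∞)`
    have hD' : forwardMap Af (k + 1) (x' t) = D (A (forwardMap Af p (x t))) := by
      rw [← hA t ht]
      exact (uniqueDiffOn_Ici 0 t ht).eq_deriv _ (hderiv (k + 1) ht)
        (((D.restrictScalars ℝ).hasFDerivAt.comp_hasDerivWithinAt t (hderiv p ht)).congr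
          (fun s hs => hD s hs) (hD t ht))
    calc forwardMap Af k (x t) = forwardMap Af k ((Ab 0) (Af 0 (x' t))) := by rw [hsol t ht]
      _ = (Ab k) (forwardMap Af (k + 1) (x' t)) :=
        (DFunLike.congr_fun (comp_forwardMap_succ hchain hk) (x' t)).symm
      _ = _ := by rw [hD']; rfl

end SkeletonChain

/-- if `B` has a regular skeleton chain of length `p = q + 1 ≥ 1` on
complex Banach spaces and the spectrum of the final chain member
`B^p = A_{2p} ∘ A_{2p-1}` lies in the open left half-plane, then every
differentiable solution of the homogeneous equation `B x' = x` on `[0, ∞)`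
satisfies `‖x t‖ → 0` as `t → ∞` (asymptotic stability of the regularized IVP).
Here `Af k = A_{2(k+1)} : X_k → X_{k+1}` and `Ab k = A_{2k+1} : X_{k+1} → X_k`. -/
theorem stmt5
    {X : ℕ → Type*} [∀ n, NormedAddCommGroup (X n)] [∀ n, NormedSpace ℂ (X n)]
    [∀ n, CompleteSpace (X n)]
    (p q : ℕ) (hp : p = q + 1)
    (Af : ∀ k : ℕ, X k →L[ℂ] X (k + 1)) (Ab : ∀ k : ℕ, X (k + 1) →L[ℂ] X k)
    (B : X 0 →L[ℂ] X 0) (hB : B = (Ab 0).comp (Af 0))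
    (hchain : ∀ k : ℕ, k + 1 < p → (Af k).comp (Ab k) = (Ab (k + 1)).comp (Af (k + 1)))
    (hreg : IsUnit ((Af q).comp (Ab q) : X (q + 1) →L[ℂ] X (q + 1)))
    (hspec : spectrum ℂ ((Af q).comp (Ab q) : X (q + 1) →L[ℂ] X (q + 1))
        ⊆ {z : ℂ | z.re < 0})
    (x x' : ℝ → X 0)
    (hx : ∀ t ∈ Set.Ici (0 : ℝ), HasDerivWithinAt x (x' t) (Set.Ici 0) t)
    (hsol : ∀ t ∈ Set.Ici (0 : ℝ), B (x' t) = x t) :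
    Tendsto (fun t : ℝ => ‖x t‖) atTop (nhds 0) := by
  subst hp hB
  set M := SkeletonChain.forwardMap Af
  set A : X (q + 1) →L[ℂ] X (q + 1) := ↑hreg.unit⁻¹
  have hA : ∀ t ∈ Ici (0 : ℝ), M (q + 1) (x' t) = A (M (q + 1) (x t)) := by
    intro t ht
    have hM : M (q + 1) (x t) = (Af q).comp (Ab q) (M (q + 1) (x' t)) := by
      rw [← hsol t ht]
      exact congrArg (Af q)
        (DFunLike.congr_fun (SkeletonChain.comp_forwardMap_succ hchain q.lt_succ_self) (x' t)).symm
    rw [hM]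
    exact (DFunLike.congr_fun hreg.val_inv_mul _).symm
  obtain ⟨D, hD⟩ := SkeletonChain.exists_eq_comp_forwardMap hchain hx hsol A hA
  have hy := eqOn_exp_smul_apply_of_hasDerivWithinAt A (y := fun t => M (q + 1) (x t))
    fun t ht => (((M (q + 1)).restrictScalars ℝ).hasFDerivAt.comp_hasDerivWithinAt t
      (hx t ht)).congr_deriv (hA t ht)
  have hdecay := tendsto_exp_smul_atTop_nhds_zero
    (spectrum_inv_subset_of_subset_re_neg hreg.unit (by rwa [hreg.unit_spec]))
  have hlim := ((D.comp (ContinuousLinearMap.apply ℂ _ (M (q + 1) (x 0)))).continuous.tendsto' 0 0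
    (by simp)).comp hdecay
  have hx0 : Tendsto x atTop (𝓝 0) := hlim.congr' <| by
    filter_upwards [eventually_ge_atTop 0] with t ht
    exact ((hD t ht).trans (congrArg D (hy ht))).symm
  simpa using hx0.norm
end

section
/- Let X be a nontrivial complex Banach space and A : X → X a continuous linear operator whose spectrum is contained in the open left half-plane {z ∈ ℂ : Re z < 0}. Then ‖exp(t A)‖ → 0 as t → +∞, where exp denotes the operator exponential in the Banach algebra of continuous linear operators on X. -/
/-!
Compactness of `σ(A)` gives `s < 0` with `Re z ≤ s` on `σ(A)`. In the closed commutative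
subalgebra generated by `A`, characters show that every point of `σ(exp A)` is `exp z` with `z`
in the spectrum of `A` relative to that subalgebra; this larger spectrum has the same maximal real
part as `σ(A)`, because `Re` is maximised on its frontier, which lies in `σ(A)`. Hence the spectral
radius of `exp A` is at most `e^s < 1`, and Gelfand's formula gives `‖(exp A)^n‖ → 0`. Finally
`exp (t A) = (exp A)^⌊t⌋ * exp ((t - ⌊t⌋) A)`, and the second factor stays bounded.
-/

open Filter NormedSpace Topology

theorem IsMaxOn.mem_frontier_of_isOpenMap {X α : Type*} [TopologicalSpace X] [LinearOrder α]
    [TopologicalSpace α] [OrderTopology α] [DenselyOrdered α] [NoMaxOrder α] {f : X → α}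
    (hf : IsOpenMap f) {K : Set X} {w : X} (hmax : IsMaxOn f K w) (hw : w ∈ K) :
    w ∈ frontier K := by
  refine ⟨subset_closure hw, fun hint => ?_⟩
  obtain ⟨b, hb, z, hz, rfl⟩ :=
    Filter.Eventually.exists_gt (hf.image_mem_nhds (mem_interior_iff_mem_nhds.mp hint))
  exact (hmax hz).not_gt hb

theorem IsCompact.exists_lt_forall_le {X α : Type*} [TopologicalSpace X] [LinearOrder α]
    [TopologicalSpace α] [OrderClosedTopology α] [NoMinOrder α] {K : Set X} (hK : IsCompact K)
    {f : X → α} (hf : ContinuousOn f K) {c : α} (hc : ∀ x ∈ K, f x < c) :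
    ∃ s < c, ∀ x ∈ K, f x ≤ s := by
  rcases K.eq_empty_or_nonempty with rfl | hne
  · obtain ⟨s, hs⟩ := exists_lt c
    exact ⟨s, hs, by simp⟩
  · obtain ⟨x₀, hx₀, hmax⟩ := hK.exists_isMaxOn hne hf
    exact ⟨f x₀, hc x₀ hx₀, hmax⟩

section BanachAlgebra

variable {A : Type*} [NormedRing A] [NormedAlgebra ℂ A] [CompleteSpace A]

theorem Subalgebra.exists_mem_spectrum_re_le (S : Subalgebra ℂ A) [hS : IsClosed (S : Set A)]
    (x : S) {z : ℂ} (hz : z ∈ spectrum ℂ x) : ∃ w ∈ spectrum ℂ (x : A), z.re ≤ w.re := by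
  have : CompleteSpace S := hS.completeSpace_coe
  obtain ⟨w, hw, hmax⟩ :=
    (spectrum.isCompact x).exists_isMaxOn ⟨z, hz⟩ Complex.continuous_re.continuousOn
  have hw_frontier := hmax.mem_frontier_of_isOpenMap Complex.isOpenMap_re hw
  exact ⟨w, Subalgebra.frontier_spectrum S x hw_frontier, hmax hz⟩

theorem spectrum.exp_subset_image_exp {C : Type*} [NormedCommRing C] [NormedAlgebra ℂ C]
    [CompleteSpace C] (a : C) : spectrum ℂ (exp a) ⊆ Complex.exp '' spectrum ℂ a := by
  let : NormedAlgebra ℚ C := .restrictScalars ℚ ℂ C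
  rintro μ hμ
  obtain ⟨φ, rfl⟩ := WeakDual.CharacterSpace.mem_spectrum_iff_exists.mp hμ
  refine ⟨φ a, WeakDual.CharacterSpace.apply_mem_spectrum φ a, ?_⟩
  rw [map_exp φ (map_continuous φ) a, Complex.exp_eq_exp_ℂ]

theorem spectralRadius_exp_le (a : A) {s : ℝ} (hs : ∀ z ∈ spectrum ℂ a, z.re ≤ s) :
    spectralRadius ℂ (exp a) ≤ ENNReal.ofReal (Real.exp s) := by
  let C := Algebra.elemental ℂ a
  let : NormedCommRing C := { (inferInstance : NormedRing C) with mul_comm := mul_comm }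
  let : NormedAlgebra ℚ A := .restrictScalars ℚ ℂ A
  let : NormedAlgebra ℚ C := .restrictScalars ℚ ℂ C
  let aC : C := ⟨a, Algebra.elemental.self_mem ℂ a⟩
  have hexp : ((exp aC : C) : A) = exp a := map_exp C.val continuous_subtype_val aC
  refine iSup₂_le fun μ hμ => ?_
  obtain ⟨z, hz, rfl⟩ := spectrum.exp_subset_image_exp aC
    (spectrum.subset_subalgebra (exp aC) (hexp ▸ hμ))
  obtain ⟨w, hw, hzw⟩ := C.exists_mem_spectrum_re_le aC hz
  rw [← ENNReal.ofReal_coe_nnreal, coe_nnnorm, Complex.norm_exp]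
  exact ENNReal.ofReal_le_ofReal (Real.exp_le_exp.mpr (hzw.trans (hs w hw)))

theorem tendsto_norm_pow_atTop_nhds_zero_of_spectralRadius_lt_one {a : A}
    (ha : spectralRadius ℂ a < 1) : Tendsto (fun n : ℕ => ‖a ^ n‖) atTop (𝓝 0) := by
  obtain ⟨q, hρq, hq1⟩ := exists_between ha
  have hq : q.toReal < 1 := ENNReal.toReal_lt_of_lt_ofReal (by simpa using hq1)
  have hbound : ∀ᶠ n : ℕ in atTop, ‖a ^ n‖ ≤ q.toReal ^ n := by
    have hgelfand := spectrum.pow_norm_pow_one_div_tendsto_nhds_spectralRadius a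
    filter_upwards [hgelfand.eventually_lt_const hρq, eventually_ne_atTop 0] with n hn hn0
    have hroot : ‖a ^ n‖ ^ (1 / n : ℝ) ≤ q.toReal :=
      ENNReal.ofReal_le_iff_le_toReal (hq1.trans ENNReal.one_lt_top).ne |>.mp hn.le
    calc ‖a ^ n‖ = (‖a ^ n‖ ^ (1 / n : ℝ)) ^ n := by
          rw [one_div, Real.rpow_inv_natCast_pow (norm_nonneg _) hn0]
      _ ≤ q.toReal ^ n := by gcongr
  exact squeeze_zero' (Eventually.of_forall fun _ => norm_nonneg _) hbound
    (tendsto_pow_atTop_nhds_zero_of_lt_one ENNReal.toReal_nonneg hq)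

theorem tendsto_norm_exp_smul_atTop_of_tendsto_norm_exp_pow {a : A}
    (h : Tendsto (fun n : ℕ => ‖exp a ^ n‖) atTop (𝓝 0)) :
    Tendsto (fun t : ℝ => ‖exp ((t : ℂ) • a)‖) atTop (𝓝 0) := by
  let : NormedAlgebra ℚ A := .restrictScalars ℚ ℂ A
  obtain ⟨M, hM⟩ := isCompact_Icc.exists_bound_of_continuousOn
    (f := fun u : ℝ => exp ((u : ℂ) • a)) (by fun_prop)
  have hsplit (n : ℕ) (u : ℝ) : exp (((n + u : ℝ) : ℂ) • a) = exp a ^ n * exp ((u : ℂ) • a) := by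
    rw [Complex.ofReal_add, add_smul,
      exp_add_of_commute (((Commute.refl a).smul_left _).smul_right _), Complex.ofReal_natCast,
      Nat.cast_smul_eq_nsmul, exp_nsmul]
  have hbound : ∀ᶠ t : ℝ in atTop, ‖exp ((t : ℂ) • a)‖ ≤ ‖exp a ^ ⌊t⌋₊‖ * M := by
    filter_upwards [eventually_ge_atTop 0] with t ht
    have hfract : t - ⌊t⌋₊ ∈ Set.Icc (0 : ℝ) 1 :=
      ⟨sub_nonneg.mpr (Nat.floor_le ht), by linarith [Nat.lt_floor_add_one t]⟩
    calc ‖exp ((t : ℂ) • a)‖ = ‖exp a ^ ⌊t⌋₊ * exp (((t - ⌊t⌋₊ : ℝ) : ℂ) • a)‖ := by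
          rw [← hsplit, add_sub_cancel]
      _ ≤ ‖exp a ^ ⌊t⌋₊‖ * M := (norm_mul_le _ _).trans (by gcongr; exact hM _ hfract)
  refine squeeze_zero' (Eventually.of_forall fun _ => norm_nonneg _) hbound ?_
  simpa using (h.comp tendsto_nat_floor_atTop).mul_const M

end BanachAlgebra

theorem stmt6_general
    {X : Type*} [NormedAddCommGroup X] [NormedSpace ℂ X] [CompleteSpace X]
    (A : X →L[ℂ] X) (hspec : spectrum ℂ A ⊆ {z : ℂ | z.re < 0}) :
    Tendsto (fun t : ℝ => ‖NormedSpace.exp ((t : ℂ) • A)‖) atTop (nhds 0) := by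
  obtain ⟨s, hs_neg, hs⟩ :=
    (spectrum.isCompact A).exists_lt_forall_le Complex.continuous_re.continuousOn hspec
  have hρ : spectralRadius ℂ (exp A) < 1 := (spectralRadius_exp_le A hs).trans_lt <| by
    simpa using Real.exp_lt_one_iff.mpr hs_neg
  exact tendsto_norm_exp_smul_atTop_of_tendsto_norm_exp_pow
    (tendsto_norm_pow_atTop_nhds_zero_of_spectralRadius_lt_one hρ)

/-- if the spectrum of a continuous linear operator `A` on a
nontrivial complex Banach space lies in the open left half-plane, then the
operator exponential satisfies `‖exp (t • A)‖ → 0` as `t → +∞`. -/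
theorem stmt6
    {X : Type*} [NormedAddCommGroup X] [NormedSpace ℂ X] [CompleteSpace X]
    [Nontrivial X]
    (A : X →L[ℂ] X) (hspec : spectrum ℂ A ⊆ {z : ℂ | z.re < 0}) :
    Tendsto (fun t : ℝ => ‖NormedSpace.exp ((t : ℂ) • A)‖) atTop (nhds 0) :=
  stmt6_general A hspec
end

section
/- Let X be a real Banach space, p ≥ 1, and B : X → X a continuous linear operator with B^p = 0 (the p-th power of B vanishes). Then the homogeneous equation B(dx/dt) = x has only the trivial solution: every differentiable x : ℝ → X with B(x'(t)) = x(t) for all t satisfies x(t) = 0 for all t. -/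
/-- if `B` is a continuous linear operator with `B ^ p = 0` for some
`p ≥ 1` (nilpotent), then the homogeneous equation `B x' = x` has only the
trivial solution. -/
theorem stmt8
    {X : Type*} [NormedAddCommGroup X] [NormedSpace ℝ X] [CompleteSpace X]
    (p : ℕ) (hp : 1 ≤ p)
    (B : X →L[ℝ] X) (hBp : B ^ p = 0)
    (x : ℝ → X) (hx : Differentiable ℝ x)
    (hsol : ∀ t : ℝ, B (deriv x t) = x t) :
    ∀ t : ℝ, x t = 0 := by
  have key : ∀ k : ℕ, ∀ t : ℝ, (B ^ (p - k)) (x t) = 0 := by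
    intro k
    induction k with
    | zero => intro t; simp [hBp]
    | succ k ih =>
      rcases le_or_gt p k with h | h
      · have : p - (k + 1) = p - k := by omega
        rw [this]; exact ih
      · have hpk : p - k = (p - (k + 1)) + 1 := by omega
        intro t
        -- the function t ↦ (B ^ (p - k)) (x t) is identically 0, so its deriv is 0
        have hder : ∀ s : ℝ, HasDerivAt (fun u => (B ^ (p - k)) (x u))
            ((B ^ (p - k)) (deriv x s)) s := fun s =>
          ((B ^ (p - k)).hasFDerivAt.comp_hasDerivAt s (hx s).hasDerivAt)
        have hzero : (fun u => (B ^ (p - k)) (x u)) = fun _ => (0 : X) := by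
          funext u; exact ih u
        have hder0 : HasDerivAt (fun u => (B ^ (p - k)) (x u)) 0 t := by
          rw [hzero]; exact hasDerivAt_const t 0
        have : (B ^ (p - k)) (deriv x t) = 0 := (hder t).unique hder0
        calc (B ^ (p - (k + 1))) (x t)
            = (B ^ (p - (k + 1))) (B (deriv x t)) := by rw [hsol t]
          _ = (B ^ (p - k)) (deriv x t) := by
              rw [hpk, pow_succ]; rfl
          _ = 0 := this
  intro t
  have := key p t
  simpa using this
end

section
/- Let B : X₀ → X₀ be a continuous linear operator on a real Banach space X₀ possessing a degenerate skeleton chain of length p: real Banach spaces X₀, X₁, …, X_p and continuous linear operators A_{2i} : X_{i−1} → X_i, A_{2i−1} : X_i → X_{i−1} (i = 1,…,p) with B = A₁ ∘ A₂, A_{2i} ∘ A_{2i−1} = A_{2i+1} ∘ A_{2i+2} for i = 1,…,p−1, and B^p := A_{2p} ∘ A_{2p−1} = 0. Then B is nilpotent; specifically, the (p+1)-st power of B is the zero operator on X₀. -/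
open ContinuousLinearMap

private def skUp {X : ℕ → Type*} [∀ n, NormedAddCommGroup (X n)] [∀ n, NormedSpace ℝ (X n)]
    (Af : ∀ k : ℕ, X k →L[ℝ] X (k + 1)) : ∀ k : ℕ, X 0 →L[ℝ] X (k + 1)
  | 0 => Af 0
  | k + 1 => (Af (k + 1)).comp (skUp Af k)

private def skDown {X : ℕ → Type*} [∀ n, NormedAddCommGroup (X n)] [∀ n, NormedSpace ℝ (X n)]
    (Ab : ∀ k : ℕ, X (k + 1) →L[ℝ] X k) : ∀ k : ℕ, X (k + 1) →L[ℝ] X 0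
  | 0 => Ab 0
  | k + 1 => (skDown Ab k).comp (Ab (k + 1))

/-- if `B` has a degenerate skeleton chain of length `p = q + 1 ≥ 1`
(`B = A₁ ∘ A₂`, `A_{2i} ∘ A_{2i-1} = A_{2i+1} ∘ A_{2i+2}`, and
`B^p = A_{2p} ∘ A_{2p-1} = 0`), then `B` is nilpotent: `B ^ (p + 1) = 0`.
Here `Af k = A_{2(k+1)} : X_k → X_{k+1}` and `Ab k = A_{2k+1} : X_{k+1} → X_k`. -/
theorem stmt10
    {X : ℕ → Type*} [∀ n, NormedAddCommGroup (X n)] [∀ n, NormedSpace ℝ (X n)]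
    [∀ n, CompleteSpace (X n)]
    (p q : ℕ) (hp : p = q + 1)
    (Af : ∀ k : ℕ, X k →L[ℝ] X (k + 1)) (Ab : ∀ k : ℕ, X (k + 1) →L[ℝ] X k)
    (B : X 0 →L[ℝ] X 0) (hB : B = (Ab 0).comp (Af 0))
    (hchain : ∀ k : ℕ, k + 1 < p → (Af k).comp (Ab k) = (Ab (k + 1)).comp (Af (k + 1)))
    (hdeg : ((Af q).comp (Ab q) : X (q + 1) →L[ℝ] X (q + 1)) = 0) :
    B ^ (p + 1) = 0 := by
  -- key lemma: pushing B past the upward composite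
  have key : ∀ k : ℕ, k < p →
      (skUp Af k).comp B = ((Af k).comp (Ab k)).comp (skUp Af k) := by
    intro k
    induction k with
    | zero =>
      intro _
      simp [skUp, hB, ContinuousLinearMap.comp_assoc]
    | succ k ih =>
      intro hk
      have hk' : k < p := Nat.lt_of_succ_lt hk
      have := ih hk'
      calc (skUp Af (k + 1)).comp B
          = (Af (k + 1)).comp ((skUp Af k).comp B) := by
            simp [skUp, ContinuousLinearMap.comp_assoc]
        _ = (Af (k + 1)).comp (((Af k).comp (Ab k)).comp (skUp Af k)) := by rw [this]
        _ = (Af (k + 1)).comp (((Ab (k + 1)).comp (Af (k + 1))).comp (skUp Af k)) := by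
            rw [hchain k hk]
        _ = ((Af (k + 1)).comp (Ab (k + 1))).comp (skUp Af (k + 1)) := by
            simp [skUp, ContinuousLinearMap.comp_assoc]
  -- B^(k+1) = down k ∘ up k for k < p
  have pow_eq : ∀ k : ℕ, k < p → B ^ (k + 1) = (skDown Ab k).comp (skUp Af k) := by
    intro k
    induction k with
    | zero =>
      intro _
      simp [skUp, skDown, hB]
    | succ k ih =>
      intro hk
      have hk' : k < p := Nat.lt_of_succ_lt hk
      have hpow : B ^ (k + 1 + 1) = (B ^ (k + 1)) * B := pow_succ B (k + 1)
      rw [hpow, ih hk', ContinuousLinearMap.mul_def, ContinuousLinearMap.comp_assoc,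
        key k hk', hchain k hk]
      simp [skUp, skDown, ContinuousLinearMap.comp_assoc]
  have hq : q < p := by omega
  have hBp : B ^ p = (skDown Ab q).comp (skUp Af q) := by
    rw [hp]; exact pow_eq q hq
  have : B ^ (p + 1) = (B ^ p) * B := pow_succ B p
  rw [this, hBp, ContinuousLinearMap.mul_def, ContinuousLinearMap.comp_assoc, key q hq]
  simp only [ContinuousLinearMap.comp_assoc]
  rw [← ContinuousLinearMap.comp_assoc (Af q) (Ab q) (skUp Af q), hdeg]
  simp
end

section
/- Let X be a real Banach space, p ≥ 1, B : X → X a continuous linear operator with B^p = 0, and f : ℝ → X a p times differentiable function. Define iterates u₀(t) = 0 and u_n(t) = −f(t) + B(u_{n−1}'(t)) for n = 1,…,p. Then u_n(t) = −Σ_{k=0}^{n−1} B^k (f^{(k)}(t)) for every n ≤ p (in particular each u_n is differentiable, so the recursion is well defined), and u_p satisfies B(u_p'(t)) = u_p(t) + f(t) for all t. -/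
/-!
Differentiating the closed form term by term shifts `f^{(k)}` to `f^{(k+1)}`, and applying `B`
then shifts `B^k` to `B^{k+1}`; so `-f + B u_n'` is the closed form with one more term, which
proves the formula by induction. At `n = p` the extra term `B^p f^{(p)}` vanishes, so the
recursion reaches a fixed point, which is exactly the equation `B u' = u + f`.
-/

open Finset

lemma add_apply_sum_pow_apply_succ {R M : Type*} [Semiring R] [TopologicalSpace M]
    [AddCommMonoid M] [Module R M] (B : M →L[R] M) (g : ℕ → M) (n : ℕ) :
    g 0 + B (∑ k ∈ range n, (B ^ k) (g (k + 1))) = ∑ k ∈ range (n + 1), (B ^ k) (g k) := by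
  simp only [map_sum, sum_range_succ' _ n, pow_succ', mul_apply_eq_comp, pow_zero,
    one_apply_eq_self]
  exact add_comm _ _

section IteratedDerivSum

variable {X : Type*} [NormedAddCommGroup X] [NormedSpace ℝ X] (B : X →L[ℝ] X) (f : ℝ → X)
  (n : ℕ)

lemma hasDerivAt_sum_pow_apply_iteratedDeriv
    (hf : ∀ k < n, Differentiable ℝ (iteratedDeriv k f)) (t : ℝ) :
    HasDerivAt (fun s => ∑ k ∈ range n, (B ^ k) (iteratedDeriv k f s))
      (∑ k ∈ range n, (B ^ k) (iteratedDeriv (k + 1) f t)) t := by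
  refine HasDerivAt.fun_sum fun k hk => ?_
  have hderiv : HasDerivAt (iteratedDeriv k f) (iteratedDeriv (k + 1) f t) t := by
    rw [iteratedDeriv_succ]
    exact (hf k (mem_range.mp hk) t).hasDerivAt
  exact (B ^ k).hasFDerivAt.comp_hasDerivAt t hderiv

lemma neg_add_apply_deriv_neg_sum_pow_apply_iteratedDeriv
    (hf : ∀ k < n, Differentiable ℝ (iteratedDeriv k f)) (t : ℝ) :
    -f t + B (deriv (fun s => -∑ k ∈ range n, (B ^ k) (iteratedDeriv k f s)) t) =
      -∑ k ∈ range (n + 1), (B ^ k) (iteratedDeriv k f t) := by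
  rw [(hasDerivAt_sum_pow_apply_iteratedDeriv B f n hf t).fun_neg.deriv, map_neg,
    ← add_apply_sum_pow_apply_succ B (fun k => iteratedDeriv k f t) n, iteratedDeriv_zero,
    neg_add]

end IteratedDerivSum

theorem stmt11_general
    {X : Type*} [NormedAddCommGroup X] [NormedSpace ℝ X]
    (p : ℕ)
    (B : X →L[ℝ] X) (hBp : B ^ p = 0)
    (f : ℝ → X) (hf : ∀ k < p, Differentiable ℝ (iteratedDeriv k f))
    (u : ℕ → ℝ → X)
    (hu0 : ∀ t : ℝ, u 0 t = 0)
    (hurec : ∀ n < p, ∀ t : ℝ, u (n + 1) t = -f t + B (deriv (u n) t)) :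
    (∀ n ≤ p, ∀ t : ℝ,
        u n t = -∑ k ∈ Finset.range n, (B ^ k) (iteratedDeriv k f t)) ∧
      ∀ t : ℝ, B (deriv (u p) t) = u p t + f t := by
  have closed_form : ∀ n ≤ p, ∀ t : ℝ,
      u n t = -∑ k ∈ range n, (B ^ k) (iteratedDeriv k f t) := by
    intro n
    induction n with
    | zero => intro _ t; simp [hu0 t]
    | succ n ih =>
      intro hn t
      rw [hurec n hn t, funext (ih (by omega)),
        neg_add_apply_deriv_neg_sum_pow_apply_iteratedDeriv B f n (fun k hk => hf k (by omega)) t]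
  refine ⟨closed_form, fun t => ?_⟩
  have fixed_point := neg_add_apply_deriv_neg_sum_pow_apply_iteratedDeriv B f p hf t
  rw [← funext (closed_form p le_rfl), sum_range_succ, hBp, zero_apply, add_zero,
    ← closed_form p le_rfl t] at fixed_point
  rw [← fixed_point]
  abel

/-- for nilpotent `B` (`B ^ p = 0`, `p ≥ 1`) and `p` times
differentiable `f`, the iterates `u 0 = 0`, `u (n+1) t = -f t + B ((u n)' t)`
satisfy the closed form `u n t = -∑_{k<n} B^k (f^{(k)} t)` for all `n ≤ p`
(so each iterate is differentiable and the recursion is well defined), and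
`u p` solves `B x' = x + f`. -/
theorem stmt11
    {X : Type*} [NormedAddCommGroup X] [NormedSpace ℝ X] [CompleteSpace X]
    (p : ℕ) (hp : 1 ≤ p)
    (B : X →L[ℝ] X) (hBp : B ^ p = 0)
    (f : ℝ → X) (hf : ∀ k < p, Differentiable ℝ (iteratedDeriv k f))
    (u : ℕ → ℝ → X)
    (hu0 : ∀ t : ℝ, u 0 t = 0)
    (hurec : ∀ n < p, ∀ t : ℝ, u (n + 1) t = -f t + B (deriv (u n) t)) :
    (∀ n ≤ p, ∀ t : ℝ,
        u n t = -∑ k ∈ Finset.range n, (B ^ k) (iteratedDeriv k f t)) ∧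
      ∀ t : ℝ, B (deriv (u p) t) = u p t + f t :=
  stmt11_general p B hBp f hf u hu0 hurec
end

section
/- Let F be a field, n ≥ 1, and B an n × n matrix over F. Then B generates a skeleton chain of finite length: there exist p ≥ 0, dimensions n₀ = n, n₁, …, n_p with n₀ > n₁ > ⋯ > n_p whenever p ≥ 1, and matrices A_{2i} of size n_i × n_{i−1} and A_{2i−1} of size n_{i−1} × n_i (i = 1,…,p) such that B = A₁ · A₂, A_{2i} · A_{2i−1} = A_{2i+1} · A_{2i+2} for i = 1,…,p−1, and the final chain member B^p := A_{2p} · A_{2p−1} (an n_p × n_p matrix, equal to B itself when p = 0) is either invertible or zero. -/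
/-!
A matrix `B` that is neither invertible nor zero has rank `r` smaller than its size, so a rank
factorization `B = C * R` through `Fin r` exists. The swapped product `R * C` is a smaller square
matrix, so by strong induction on the size it generates a skeleton chain, and prepending the pair
`(C, R)` to that chain yields one for `B`.
-/

namespace Matrix

variable {K : Type*} [Field K]

theorem exists_rank_factorization {m n : Type*} [Fintype m] [Fintype n] (A : Matrix m n K) :
    ∃ (C : Matrix m (Fin A.rank) K) (R : Matrix (Fin A.rank) n K), A = C * R := by
  classical
  let W := LinearMap.range A.mulVecLin
  let b : Module.Basis (Fin A.rank) K W := Module.finBasis K W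
  refine ⟨LinearMap.toMatrix b (Pi.basisFun K m) W.subtype,
    LinearMap.toMatrix (Pi.basisFun K n) b A.mulVecLin.rangeRestrict, ?_⟩
  rw [← LinearMap.toMatrix_comp, LinearMap.subtype_comp_codRestrict]
  ext i j
  simp [LinearMap.toMatrix_apply]

theorem rank_lt_card_of_not_isUnit {n : Type*} [Fintype n] [DecidableEq n] {A : Matrix n n K}
    (hA : ¬IsUnit A) : A.rank < Fintype.card n := by
  refine (rank_le_card_width A).lt_of_ne fun hrank => hA ?_
  rw [← mulVec_surjective_iff_isUnit, ← coe_mulVecLin, ← LinearMap.range_eq_top]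
  exact Submodule.eq_top_of_finrank_eq (hrank.trans (Module.finrank_fintype_fun_eq_card K).symm)

variable (K) in
/-- `Ab i` is the paper's `A_{2i+1}` and `Af i` is `A_{2i+2}`, so the chain members are
`Af i * Ab i`. -/
def HasSkeletonChain {m : ℕ} (M : Matrix (Fin m) (Fin m) K) : Prop :=
  ∃ (p : ℕ) (d : ℕ → ℕ) (h0 : d 0 = m)
    (Af : ∀ i : ℕ, Matrix (Fin (d (i + 1))) (Fin (d i)) K)
    (Ab : ∀ i : ℕ, Matrix (Fin (d i)) (Fin (d (i + 1))) K),
    (∀ i < p, d (i + 1) < d i) ∧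
    (1 ≤ p → M.submatrix (Fin.cast h0) (Fin.cast h0) = Ab 0 * Af 0) ∧
    (∀ i : ℕ, i + 1 < p → Af i * Ab i = Ab (i + 1) * Af (i + 1)) ∧
    (∀ q : ℕ, p = q + 1 → (IsUnit (Af q * Ab q) ∨ Af q * Ab q = 0)) ∧
    (p = 0 → (IsUnit M ∨ M = 0))

theorem hasSkeletonChain_of_isUnit_or_eq_zero {m : ℕ} {M : Matrix (Fin m) (Fin m) K}
    (hM : IsUnit M ∨ M = 0) : HasSkeletonChain K M :=
  ⟨0, fun _ => m, rfl, fun _ => 0, fun _ => 0, by simp, by simp, by simp, by simp, fun _ => hM⟩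

theorem HasSkeletonChain.of_mul_swap {m r : ℕ} (hr : r < m) {C : Matrix (Fin m) (Fin r) K}
    {R : Matrix (Fin r) (Fin m) K} (h : HasSkeletonChain K (R * C)) :
    HasSkeletonChain K (C * R) := by
  obtain ⟨p, d, rfl, Af, Ab, hdec, hfirst, hswap, hlast, hzero⟩ := h
  refine ⟨p + 1, fun | 0 => m | i + 1 => d i, rfl, fun | 0 => R | i + 1 => Af i,
    fun | 0 => C | i + 1 => Ab i, ?_, ?_, ?_, ?_, ?_⟩
  · rintro (_ | i) hi
    exacts [hr, hdec i (by omega)]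
  · intro _
    simp
  · rintro (_ | i) hi
    · simpa using hfirst (by omega)
    · exact hswap i (by omega)
  · rintro (_ | q) hq
    · simpa using hzero (by omega)
    · exact hlast q (by omega)
  · omega

theorem hasSkeletonChain {m : ℕ} (M : Matrix (Fin m) (Fin m) K) : HasSkeletonChain K M := by
  induction m using Nat.strong_induction_on with
  | _ m ih =>
  by_cases hM : IsUnit M ∨ M = 0
  · exact hasSkeletonChain_of_isUnit_or_eq_zero hM
  have hrank : M.rank < m := by
    simpa using rank_lt_card_of_not_isUnit (not_or.mp hM).1
  obtain ⟨C, R, hCR⟩ := M.exists_rank_factorization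
  rw [hCR]
  exact (ih _ hrank (R * C)).of_mul_swap hrank

end Matrix

theorem stmt13_general
    {F : Type*} [Field F]
    (n : ℕ) (B : Matrix (Fin n) (Fin n) F) :
    ∃ (p : ℕ) (d : ℕ → ℕ) (h0 : d 0 = n)
      (Af : ∀ i : ℕ, Matrix (Fin (d (i + 1))) (Fin (d i)) F)
      (Ab : ∀ i : ℕ, Matrix (Fin (d i)) (Fin (d (i + 1))) F),
      (∀ i < p, d (i + 1) < d i) ∧
      (1 ≤ p → B.submatrix (Fin.cast h0) (Fin.cast h0) = Ab 0 * Af 0) ∧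
      (∀ i : ℕ, i + 1 < p → Af i * Ab i = Ab (i + 1) * Af (i + 1)) ∧
      (∀ q : ℕ, p = q + 1 → (IsUnit (Af q * Ab q) ∨ Af q * Ab q = 0)) ∧
      (p = 0 → (IsUnit B ∨ B = 0)) :=
  B.hasSkeletonChain

/-- every square matrix `B` over a field generates a skeleton
chain of finite length: there are `p ≥ 0`, strictly decreasing dimensions
`d 0 = n > d 1 > ⋯ > d p` (when `p ≥ 1`), and matrices
`Af i = A_{2(i+1)}` (size `n_{i+1} × n_i`) and `Ab i = A_{2i+1}` (size
`n_i × n_{i+1}`) with `B = A₁ * A₂`, the permutation identities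
`A_{2i} * A_{2i-1} = A_{2i+1} * A_{2i+2}` for `i = 1, …, p-1`, and the final
chain member `B^p = A_{2p} * A_{2p-1}` (equal to `B` itself when `p = 0`)
invertible or zero. -/
theorem stmt13
    {F : Type*} [Field F] [DecidableEq F]
    (n : ℕ) (hn : 1 ≤ n) (B : Matrix (Fin n) (Fin n) F) :
    ∃ (p : ℕ) (d : ℕ → ℕ) (h0 : d 0 = n)
      (Af : ∀ i : ℕ, Matrix (Fin (d (i + 1))) (Fin (d i)) F)
      (Ab : ∀ i : ℕ, Matrix (Fin (d i)) (Fin (d (i + 1))) F),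
      (∀ i < p, d (i + 1) < d i) ∧
      (1 ≤ p → B.submatrix (Fin.cast h0) (Fin.cast h0) = Ab 0 * Af 0) ∧
      (∀ i : ℕ, i + 1 < p → Af i * Ab i = Ab (i + 1) * Af (i + 1)) ∧
      (∀ q : ℕ, p = q + 1 → (IsUnit (Af q * Ab q) ∨ Af q * Ab q = 0)) ∧
      (p = 0 → (IsUnit B ∨ B = 0)) :=
  stmt13_general n B
end

section
/- Let B : X₀ → X₀ be a continuous linear operator on a real Banach space X₀ with a skeleton chain of length p (real Banach spaces X₀,…,X_p, continuous linear operators A_{2i} : X_{i−1} → X_i, A_{2i−1} : X_i → X_{i−1} with B = A₁ ∘ A₂ and A_{2i} ∘ A_{2i−1} = A_{2i+1} ∘ A_{2i+2} for i = 1,…,p−1), and let B^p := A_{2p} ∘ A_{2p−1}. If f : ℝ → X₀ and x : ℝ → X₀ is differentiable with B(x'(t)) = x(t) + f(t) for all t, then the function x_p := A_{2p} ∘ A_{2p−2} ∘ ⋯ ∘ A₂ ∘ x : ℝ → X_p is differentiable and satisfies B^p(x_p'(t)) = x_p(t) + (A_{2p} ∘ ⋯ ∘ A₂)(f(t)) for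 all t. -/
open ContinuousLinearMap

/-- iterated transfer step along a skeleton chain of length
`p = q + 1 ≥ 1`: any differentiable solution `x` of `B x' = x + f` projects
under `M = A_{2p} ∘ ⋯ ∘ A₂` to a differentiable solution `x_p = M ∘ x` of the
equation `B^p x_p' = x_p + M f` governed by the final chain member
`B^p = A_{2p} ∘ A_{2p-1}`.
Here `Af k = A_{2(k+1)} : X_k → X_{k+1}` and `Ab k = A_{2k+1} : X_{k+1} → X_k`. -/
theorem stmt14
    {X : ℕ → Type*} [∀ n, NormedAddCommGroup (X n)] [∀ n, NormedSpace ℝ (X n)]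
    [∀ n, CompleteSpace (X n)]
    (p q : ℕ) (hp : p = q + 1)
    (Af : ∀ k : ℕ, X k →L[ℝ] X (k + 1)) (Ab : ∀ k : ℕ, X (k + 1) →L[ℝ] X k)
    (B : X 0 →L[ℝ] X 0) (hB : B = (Ab 0).comp (Af 0))
    (hchain : ∀ k : ℕ, k + 1 < p → (Af k).comp (Ab k) = (Ab (k + 1)).comp (Af (k + 1)))
    (f x : ℝ → X 0) (hx : Differentiable ℝ x)
    (hsol : ∀ t : ℝ, B (deriv x t) = x t + f t) :
    Differentiable ℝ (fun t => chainComp Af (q + 1) (x t)) ∧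
      ∀ t : ℝ, ((Af q).comp (Ab q)) (deriv (fun s => chainComp Af (q + 1) (x s)) t)
        = chainComp Af (q + 1) (x t) + chainComp Af (q + 1) (f t) := by
  subst hp
  have hder : ∀ (k : ℕ) (t : ℝ),
      deriv (fun s => chainComp Af k (x s)) t = chainComp Af k (deriv x t) := by
    intro k t
    exact (((chainComp Af k).hasFDerivAt).comp_hasDerivAt t (hx t).hasDerivAt).deriv
  have hdiff : ∀ k : ℕ, Differentiable ℝ (fun t => chainComp Af k (x t)) := fun k =>
    (chainComp Af k).differentiable.comp hx
  have key : ∀ k : ℕ, k ≤ q → ∀ t : ℝ,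
      (Af k) ((Ab k) (chainComp Af (k + 1) (deriv x t)))
        = chainComp Af (k + 1) (x t) + chainComp Af (k + 1) (f t) := by
    intro k
    induction k with
    | zero =>
      intro _ t
      have : (Ab 0) ((Af 0) (deriv x t)) = x t + f t := by
        have := hsol t; rw [hB] at this; simpa using this
      simp [chainComp, this]
    | succ k ih =>
      intro hk t
      have hcomm : ∀ v : X (k + 1), (Ab (k + 1)) ((Af (k + 1)) v) = (Af k) ((Ab k) v) := by
        intro v
        have := hchain k (by omega)
        have := congrArg (fun (T : X (k+1) →L[ℝ] X (k+1)) => T v) this.symm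
        simpa using this
      have ihk := ih (by omega) t
      calc (Af (k+1)) ((Ab (k+1)) (chainComp Af (k + 2) (deriv x t)))
          = (Af (k+1)) ((Ab (k+1)) ((Af (k+1)) (chainComp Af (k+1) (deriv x t)))) := by
            simp [chainComp]
        _ = (Af (k+1)) ((Af k) ((Ab k) (chainComp Af (k+1) (deriv x t)))) := by
            rw [hcomm]
        _ = (Af (k+1)) (chainComp Af (k+1) (x t) + chainComp Af (k+1) (f t)) := by rw [ihk]
        _ = chainComp Af (k + 2) (x t) + chainComp Af (k + 2) (f t) := by
            simp [chainComp]
  refine ⟨hdiff (q + 1), fun t => ?_⟩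
  rw [hder (q + 1) t]
  simpa using key q le_rfl t
end

section
/- Let B : X₀ → X₀ be a continuous linear operator on a real Banach space X₀ possessing a regular skeleton chain of length p (real Banach spaces X₀,…,X_p, operators A_{2i} : X_{i−1} → X_i, A_{2i−1} : X_i → X_{i−1} with B = A₁ ∘ A₂, A_{2i} ∘ A_{2i−1} = A_{2i+1} ∘ A_{2i+2} for i = 1,…,p−1, and B^p = A_{2p} ∘ A_{2p−1} continuously invertible), let M := A_{2p} ∘ ⋯ ∘ A₂, and let f : ℝ → X₀ be p times differentiable. For c₀ ∈ X_p let x(·; c₀) denote the unique differentiable solution of B(x'(t)) = x(t) + f(t) with M(x(0)) = c₀. Then the solution depends continuously on c₀: for every t ∈ ℝ there is a constant C(t) ≥ 0 such that ‖x(t; c₀) − x(t; c₁)‖ ≤ C(t) ‖c₀ − c₁‖ for all c₀, c₁ ∈ X_p; in particular, for each t the map c₀ ↦ x(t; c₀) is continuous. -/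
open ContinuousLinearMap

open NormedSpace

/-!
The difference `y` of two solutions solves the homogeneous equation `B y' = y`. Pushing it
through the chain, `z_k := M_k ∘ y` satisfies `z_k = A_{2k+1} z_{k+1}'` for `k < p`, and at the
top `z_p = B^p z_p'`, i.e. `z_p' = (B^p)⁻¹ z_p`, so `z_p(t) = exp(t (B^p)⁻¹) z_p(0)`. Descending
the chain again expresses `y(t) = z_0(t)` as a fixed bounded operator applied to
`z_p(0) = M y(0) = c₀ - c₁`.
-/

theorem eq_exp_smul_apply_of_hasDerivAt {E : Type*} [NormedAddCommGroup E] [NormedSpace ℝ E]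
    [CompleteSpace E] (L : E →L[ℝ] E) {z : ℝ → E} (hz : ∀ t, HasDerivAt z (L (z t)) t)
    (t : ℝ) : z t = exp (t • L) (z 0) := by
  have hexp : ∀ s, HasDerivAt (fun s => exp (s • L) (z 0)) (L (exp (s • L) (z 0))) s := fun s =>
    by simpa using (hasDerivAt_exp_smul_const' L s).clm_apply (hasDerivAt_const s (z 0))
  have := ODE_solution_unique_univ (v := fun _ => L) (s := fun _ => Set.univ) (t₀ := 0)
    (fun _ => L.lipschitz.lipschitzOnWith) (fun s => ⟨hz s, trivial⟩)
    (fun s => ⟨hexp s, trivial⟩) (by simp)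
  exact congrFun this t

section SkeletonChain

variable {X : ℕ → Type*} [∀ n, NormedAddCommGroup (X n)] [∀ n, NormedSpace ℝ (X n)]
  {Af : ∀ k : ℕ, X k →L[ℝ] X (k + 1)} {Ab : ∀ k : ℕ, X (k + 1) →L[ℝ] X k}

theorem chainComp_comp_eq {k : ℕ}
    (hchain : ∀ i < k, (Af i).comp (Ab i) = (Ab (i + 1)).comp (Af (i + 1))) :
    (chainComp Af k).comp ((Ab 0).comp (Af 0)) = (Ab k).comp (chainComp Af (k + 1)) := by
  induction k with
  | zero => rfl
  | succ m ih =>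
    calc (chainComp Af (m + 1)).comp ((Ab 0).comp (Af 0))
        = (Af m).comp ((chainComp Af m).comp ((Ab 0).comp (Af 0))) := rfl
      _ = ((Af m).comp (Ab m)).comp (chainComp Af (m + 1)) := by
        rw [ih fun i hi => hchain i (by omega)]; rfl
      _ = (Ab (m + 1)).comp (chainComp Af (m + 2)) := by
        rw [hchain m (by omega)]; rfl

theorem chainComp_apply_eq_apply_deriv {k : ℕ}
    (hchain : ∀ i < k, (Af i).comp (Ab i) = (Ab (i + 1)).comp (Af (i + 1)))
    {y : ℝ → X 0} (hy : Differentiable ℝ y) (hhom : ∀ s, (Ab 0).comp (Af 0) (deriv y s) = y s)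
    (t : ℝ) : chainComp Af k (y t) = Ab k (deriv (fun s => chainComp Af (k + 1) (y s)) t) := by
  have hderiv : HasDerivAt (fun s => chainComp Af (k + 1) (y s))
      (chainComp Af (k + 1) (deriv y t)) t :=
    (chainComp Af (k + 1)).hasFDerivAt.comp_hasDerivAt t (hy t).hasDerivAt
  rw [hderiv.deriv, ← hhom t]
  exact congrArg (· (deriv y t)) (chainComp_comp_eq hchain)

variable [∀ n, CompleteSpace (X n)]

/-- Choosing `D` before `z` is what makes the final estimate uniform in the initial data. -/
theorem exists_forall_eq_exp_smul {n : ℕ} (L : X n →L[ℝ] X n) {k j : ℕ} (hkj : k + j = n) :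
    ∃ D : X n →L[ℝ] X k, ∀ z : ∀ i, ℝ → X i,
      (∀ i < n, ∀ t, z i t = Ab i (deriv (z (i + 1)) t)) →
      (∀ t, z n t = exp (t • L) (z n 0)) → ∀ t, z k t = D (exp (t • L) (z n 0)) := by
  induction j generalizing k with
  | zero =>
    obtain rfl : k = n := hkj
    exact ⟨ContinuousLinearMap.id ℝ _, fun z _ htop => htop⟩
  | succ j ih =>
    obtain ⟨D, hD⟩ := ih (k := k + 1) (by omega)
    refine ⟨(Ab k).comp (D.comp L), fun z hdesc htop t => ?_⟩
    have hderiv : HasDerivAt (fun s => D (exp (s • L) (z n 0)))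
        (D (L (exp (t • L) (z n 0)))) t := by
      simpa [Function.comp_def] using D.hasFDerivAt.comp_hasDerivAt t
        ((hasDerivAt_exp_smul_const' L t).clm_apply (hasDerivAt_const t (z n 0)))
    rw [hdesc k (by omega) t, funext (hD z hdesc htop), hderiv.deriv]
    rfl

theorem exists_forall_apply_eq_chainComp_apply {q : ℕ}
    (hchain : ∀ i < q, (Af i).comp (Ab i) = (Ab (i + 1)).comp (Af (i + 1)))
    (hreg : IsUnit ((Af q).comp (Ab q))) (t : ℝ) :
    ∃ T : X (q + 1) →L[ℝ] X 0, ∀ y : ℝ → X 0, Differentiable ℝ y →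
      (∀ s, (Ab 0).comp (Af 0) (deriv y s) = y s) → y t = T (chainComp Af (q + 1) (y 0)) := by
  obtain ⟨u, hu⟩ := hreg
  let L : X (q + 1) →L[ℝ] X (q + 1) := ↑u⁻¹
  obtain ⟨D, hD⟩ := exists_forall_eq_exp_smul (Ab := Ab) L (k := 0) (j := q + 1) (by omega)
  refine ⟨D.comp (exp (t • L)), fun y hy hhom => ?_⟩
  let z : ∀ i, ℝ → X i := fun i s => chainComp Af i (y s)
  have hdesc : ∀ i < q + 1, ∀ s, z i s = Ab i (deriv (z (i + 1)) s) := fun i hi =>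
    chainComp_apply_eq_apply_deriv (fun j hj => hchain j (by omega)) hy hhom
  have htop : ∀ s, HasDerivAt (z (q + 1)) (L (z (q + 1) s)) s := by
    intro s
    have hBp : z (q + 1) s = ((Af q).comp (Ab q)) (deriv (z (q + 1)) s) :=
      congrArg (Af q) (hdesc q q.lt_succ_self s)
    have hLu : L ((u : X (q + 1) →L[ℝ] X (q + 1)) (deriv (z (q + 1)) s)) = deriv (z (q + 1)) s :=
      congrArg (· (deriv (z (q + 1)) s)) u.inv_mul
    rw [hBp, ← hu, hLu]
    exact ((chainComp Af (q + 1)).differentiable.comp hy s).hasDerivAt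
  exact hD z hdesc (eq_exp_smul_apply_of_hasDerivAt L htop) t

end SkeletonChain

theorem stmt16_general
    {X : ℕ → Type*} [∀ n, NormedAddCommGroup (X n)] [∀ n, NormedSpace ℝ (X n)]
    [∀ n, CompleteSpace (X n)]
    (p q : ℕ) (hp : p = q + 1)
    (Af : ∀ k : ℕ, X k →L[ℝ] X (k + 1)) (Ab : ∀ k : ℕ, X (k + 1) →L[ℝ] X k)
    (B : X 0 →L[ℝ] X 0) (hB : B = (Ab 0).comp (Af 0))
    (hchain : ∀ k : ℕ, k + 1 < p → (Af k).comp (Ab k) = (Ab (k + 1)).comp (Af (k + 1)))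
    (hreg : IsUnit ((Af q).comp (Ab q) : X (q + 1) →L[ℝ] X (q + 1)))
    (f : ℝ → X 0)
    (sol : X p → ℝ → X 0)
    (hsol : ∀ c : X p, Differentiable ℝ (sol c) ∧
      (∀ t : ℝ, B (deriv (sol c) t) = sol c t + f t) ∧
      chainComp Af p (sol c 0) = c) :
    ∀ t : ℝ, (∃ C : ℝ, 0 ≤ C ∧
        ∀ c₀ c₁ : X p, ‖sol c₀ t - sol c₁ t‖ ≤ C * ‖c₀ - c₁‖) ∧
      Continuous (fun c : X p => sol c t) := by
  subst hp hB
  intro t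
  obtain ⟨T, hT⟩ := exists_forall_apply_eq_chainComp_apply
    (fun i hi => hchain i (by omega)) hreg t
  have hdiff : ∀ c₀ c₁, sol c₀ t - sol c₁ t = T (c₀ - c₁) := by
    intro c₀ c₁
    obtain ⟨hd₀, hode₀, hinit₀⟩ := hsol c₀
    obtain ⟨hd₁, hode₁, hinit₁⟩ := hsol c₁
    refine (hT _ (hd₀.sub hd₁) fun s => ?_).trans (by simp [hinit₀, hinit₁])
    rw [deriv_sub (hd₀ s) (hd₁ s), map_sub, hode₀, hode₁, Pi.sub_apply]
    abel
  have hbound : ∀ c₀ c₁, ‖sol c₀ t - sol c₁ t‖ ≤ ‖T‖ * ‖c₀ - c₁‖ := fun c₀ c₁ =>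
    hdiff c₀ c₁ ▸ T.le_opNorm _
  have hlip : LipschitzWith ‖T‖₊ fun c : X (q + 1) => sol c t :=
    LipschitzWith.of_dist_le_mul fun c₀ c₁ => by simpa [dist_eq_norm] using hbound c₀ c₁
  exact ⟨⟨‖T‖, norm_nonneg _, hbound⟩, hlip.continuous⟩

/-- continuous dependence on the regularized initial data: for a
regular skeleton chain of length `p = q + 1 ≥ 1` and a `p` times differentiable
`f`, if `sol c` denotes the (unique) differentiable solution of `B x' = x + f`
with `M x(0) = c`, then for every `t` there is `C t ≥ 0` with
`‖sol c₀ t - sol c₁ t‖ ≤ C t * ‖c₀ - c₁‖`; in particular `c ↦ sol c t` is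
continuous.
Here `Af k = A_{2(k+1)} : X_k → X_{k+1}` and `Ab k = A_{2k+1} : X_{k+1} → X_k`,
and `M = chainComp Af p`. -/
theorem stmt16
    {X : ℕ → Type*} [∀ n, NormedAddCommGroup (X n)] [∀ n, NormedSpace ℝ (X n)]
    [∀ n, CompleteSpace (X n)]
    (p q : ℕ) (hp : p = q + 1)
    (Af : ∀ k : ℕ, X k →L[ℝ] X (k + 1)) (Ab : ∀ k : ℕ, X (k + 1) →L[ℝ] X k)
    (B : X 0 →L[ℝ] X 0) (hB : B = (Ab 0).comp (Af 0))
    (hchain : ∀ k : ℕ, k + 1 < p → (Af k).comp (Ab k) = (Ab (k + 1)).comp (Af (k + 1)))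
    (hreg : IsUnit ((Af q).comp (Ab q) : X (q + 1) →L[ℝ] X (q + 1)))
    (f : ℝ → X 0) (hf : ∀ k < p, Differentiable ℝ (iteratedDeriv k f))
    (sol : X p → ℝ → X 0)
    (hsol : ∀ c : X p, Differentiable ℝ (sol c) ∧
      (∀ t : ℝ, B (deriv (sol c) t) = sol c t + f t) ∧
      chainComp Af p (sol c 0) = c) :
    ∀ t : ℝ, (∃ C : ℝ, 0 ≤ C ∧
        ∀ c₀ c₁ : X p, ‖sol c₀ t - sol c₁ t‖ ≤ C * ‖c₀ - c₁‖) ∧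
      Continuous (fun c : X p => sol c t) :=
  stmt16_general p q hp Af Ab B hB hchain hreg f sol hsol
end
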